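/- arXiv:2501.11767 — 2 statements merged into one kernel-verified Lean document; each statement's English description precedes it below -/
import Mathlib

section
/- Let M and K be real n×n matrices with M symmetric positive definite and K symmetric positive semidefinite, and let a, b be positive real numbers. Define S = a·M + b²·K·M⁻¹·K and Ŝ = (b·K + √a·M)·M⁻¹·(b·K + √a·M). Then S ⪯ Ŝ ⪯ 2·S in the Loewner order; in particular Ŝ is symmetric positive definite. -/
/-!
Writing `s = √a`, expanding the product gives `Ŝ = S + 2 s b K`, and expanding the
product with `s` replaced by `-s` gives `2 S - Ŝ = (b K - s M) M⁻¹ (b K - s M)`.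
The first difference is positive semidefinite because `K` is, the second because it is
a congruence of `M⁻¹` by a symmetric matrix; and `Ŝ = S + 2 s b K` is positive definite
because `S ⪰ a M` is.
-/

namespace Matrix

variable {n : Type*} [Fintype n] [DecidableEq n]

theorem add_smul_mul_inv_mul_add_smul {R : Type*} [CommRing R] {M : Matrix n n R}
    (hM : IsUnit M) (X : Matrix n n R) (s : R) :
    (X + s • M) * M⁻¹ * (X + s • M) = X * M⁻¹ * X + (2 * s) • X + s ^ 2 • M := by
  have hdet : IsUnit M.det := (isUnit_iff_isUnit_det M).mp hM
  simp only [Matrix.add_mul, Matrix.mul_add, Matrix.smul_mul, Matrix.mul_smul,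
    mul_nonsing_inv _ hdet, Matrix.one_mul, Matrix.mul_assoc, nonsing_inv_mul _ hdet,
    Matrix.mul_one]
  module

theorem PosDef.posSemidef_mul_inv_mul_self {K : Type*} [Field K] [PartialOrder K]
    [StarRing K] [StarOrderedRing K] {M Y : Matrix n n K} (hM : M.PosDef)
    (hY : Y.IsHermitian) : (Y * M⁻¹ * Y).PosSemidef := by
  simpa only [hY.eq] using hM.inv.posSemidef.conjTranspose_mul_mul_same Y

end Matrix

open Matrix

/-- With `M` symmetric positive definite, `K` symmetric positive semidefinite and
`a, b > 0`, the exact Schur complement `S = a • M + b² • K M⁻¹ K` and its matching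
approximation `Ŝ = (b K + √a M) M⁻¹ (b K + √a M)` satisfy `S ⪯ Ŝ ⪯ 2 S` in the Loewner
order (i.e. `Ŝ − S` and `2 S − Ŝ` are positive semidefinite); in particular `Ŝ` is
symmetric positive definite. -/
theorem matching_loewner_bounds {n : ℕ} (M K : Matrix (Fin n) (Fin n) ℝ)
    (hM : M.PosDef) (hK : K.PosSemidef) (a b : ℝ) (ha : 0 < a) (hb : 0 < b) :
    (((b • K + Real.sqrt a • M) * M⁻¹ * (b • K + Real.sqrt a • M)
        - (a • M + b ^ 2 • (K * M⁻¹ * K))).PosSemidef) ∧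
    (((2 : ℝ) • (a • M + b ^ 2 • (K * M⁻¹ * K))
        - (b • K + Real.sqrt a • M) * M⁻¹ * (b • K + Real.sqrt a • M)).PosSemidef) ∧
    ((b • K + Real.sqrt a • M) * M⁻¹ * (b • K + Real.sqrt a • M)).PosDef := by
  set s := Real.sqrt a
  have hs : 0 < s := Real.sqrt_pos.mpr ha
  have hsa : s ^ 2 = a := Real.sq_sqrt ha.le
  have hKMK : (b • K) * M⁻¹ * (b • K) = b ^ 2 • (K * M⁻¹ * K) := by
    simp only [Matrix.smul_mul, Matrix.mul_smul, smul_smul, sq]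
  have hŜ := add_smul_mul_inv_mul_add_smul hM.isUnit (b • K) s
  have hŜneg := add_smul_mul_inv_mul_add_smul hM.isUnit (b • K) (-s)
  rw [hKMK, hsa] at hŜ
  rw [hKMK, neg_sq, hsa] at hŜneg
  have hŜ_eq : (b • K + s • M) * M⁻¹ * (b • K + s • M)
      = (a • M + b ^ 2 • (K * M⁻¹ * K)) + (2 * s * b) • K := by
    rw [hŜ]; module
  have hdiff : (2 : ℝ) • (a • M + b ^ 2 • (K * M⁻¹ * K))
      - (b • K + s • M) * M⁻¹ * (b • K + s • M)
      = (b • K + (-s) • M) * M⁻¹ * (b • K + (-s) • M) := by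
    rw [hŜ, hŜneg]; module
  have hS : (a • M + b ^ 2 • (K * M⁻¹ * K)).PosDef :=
    (hM.smul ha).add_posSemidef
      ((hM.posSemidef_mul_inv_mul_self hK.isHermitian).smul (sq_nonneg b))
  have hgap : ((2 * s * b) • K).PosSemidef := hK.smul (by positivity)
  have hsym : (b • K + (-s) • M).IsHermitian :=
    (hK.isHermitian.smul (.all b)).add (hM.isHermitian.smul (.all (-s)))
  refine ⟨?_, hdiff ▸ hM.posSemidef_mul_inv_mul_self hsym, hŜ_eq ▸ hS.add_posSemidef hgap⟩
  rwa [hŜ_eq, add_sub_cancel_left]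
end

section
/- Let M and K be real n×n matrices with M symmetric positive definite and K symmetric positive semidefinite, and let a, b be positive real numbers. Define S = a·M + b²·K·M⁻¹·K and Ŝ = (b·K + √a·M)·M⁻¹·(b·K + √a·M). Then for every real number λ and nonzero vector x with S·x = λ·Ŝ·x, it holds that 1/2 ≤ λ ≤ 1. Equivalently, every eigenvalue of Ŝ⁻¹·S lies in the interval [1/2, 1]. -/
open Matrix in


/-- With `M` symmetric positive definite, `K` symmetric positive semidefinite and
`a, b > 0`, let `S = a • M + b² • K M⁻¹ K` and `Ŝ = (b K + √a M) M⁻¹ (b K + √a M)`.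
Then every generalized eigenvalue `λ` with `S x = λ Ŝ x` for some nonzero `x`
satisfies `1/2 ≤ λ ≤ 1`, i.e. every eigenvalue of `Ŝ⁻¹ S` lies in `[1/2, 1]`. -/
theorem matching_eigenvalue_bounds {n : ℕ} (M K : Matrix (Fin n) (Fin n) ℝ)
    (hM : M.PosDef) (hK : K.PosSemidef) (a b : ℝ) (ha : 0 < a) (hb : 0 < b)
    (S Shat : Matrix (Fin n) (Fin n) ℝ)
    (hS : S = a • M + b ^ 2 • (K * M⁻¹ * K))
    (hShat : Shat = (b • K + Real.sqrt a • M) * M⁻¹ * (b • K + Real.sqrt a • M)) :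
    ∀ (lam : ℝ) (x : Fin n → ℝ), x ≠ 0 → S.mulVec x = lam • Shat.mulVec x →
      1 / 2 ≤ lam ∧ lam ≤ 1 := by
  intro lam x hx hEq
  set r := Real.sqrt a with hr
  have hr0 : 0 < r := Real.sqrt_pos.mpr ha
  have hrr : r * r = a := Real.mul_self_sqrt ha.le
  have hdet : IsUnit M.det := isUnit_iff_ne_zero.mpr hM.det_pos.ne'
  have hMinv : M * M⁻¹ = 1 := Matrix.mul_nonsing_inv M hdet
  have hinvM : M⁻¹ * M = 1 := Matrix.nonsing_inv_mul M hdet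
  -- key matrix identities
  have h1 : Shat = S + (2 * b * r) • K := by
    subst hS hShat
    simp only [Matrix.add_mul, Matrix.mul_add, smul_mul_assoc, mul_smul_comm, smul_smul,
      Matrix.mul_assoc, hinvM, Matrix.mul_one]
    rw [show M * (M⁻¹ * K) = K from by rw [← Matrix.mul_assoc, hMinv, Matrix.one_mul]]
    simp only [smul_add, smul_sub, smul_smul]
    rw [hrr]
    module
  have h2 : (b • K - r • M) * M⁻¹ * (b • K - r • M) = (2 : ℝ) • S - Shat := by
    rw [h1]; subst hS
    simp only [Matrix.sub_mul, Matrix.mul_sub, smul_mul_assoc, mul_smul_comm, smul_smul,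
      Matrix.mul_assoc, hinvM, Matrix.mul_one]
    rw [show M * (M⁻¹ * K) = K from by rw [← Matrix.mul_assoc, hMinv, Matrix.one_mul]]
    simp only [smul_add, smul_sub, smul_smul]
    rw [hrr]
    module
  -- positivity facts
  have hMinvPSD : (M⁻¹).PosSemidef := hM.inv.posSemidef
  have hKsym : K.conjTranspose = K := hK.1
  have hX : (K * M⁻¹ * K).PosSemidef := by
    have := hMinvPSD.conjTranspose_mul_mul_same K
    rwa [hKsym] at this
  have hBsym : (b • K - r • M).conjTranspose = b • K - r • M := by
    rw [Matrix.conjTranspose_sub, Matrix.conjTranspose_smul, Matrix.conjTranspose_smul, hKsym, hM.1]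
    simp
  have hY : ((b • K - r • M) * M⁻¹ * (b • K - r • M)).PosSemidef := by
    have := hMinvPSD.conjTranspose_mul_mul_same (b • K - r • M)
    rwa [hBsym] at this
  -- quadratic forms
  have qM : 0 < x ⬝ᵥ M.mulVec x := by simpa using hM.re_dotProduct_pos hx
  have qK : 0 ≤ x ⬝ᵥ K.mulVec x := by simpa using hK.re_dotProduct_nonneg x
  have qX : 0 ≤ x ⬝ᵥ (K * M⁻¹ * K).mulVec x := by simpa using hX.re_dotProduct_nonneg x
  have qY : 0 ≤ x ⬝ᵥ ((b • K - r • M) * M⁻¹ * (b • K - r • M)).mulVec x := by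
    simpa using hY.re_dotProduct_nonneg x
  set qS := x ⬝ᵥ S.mulVec x with hqS
  set qSh := x ⬝ᵥ Shat.mulVec x with hqSh
  have eS : qS = a * (x ⬝ᵥ M.mulVec x) + b ^ 2 * (x ⬝ᵥ (K * M⁻¹ * K).mulVec x) := by
    rw [hqS, hS]
    simp [Matrix.add_mulVec, Matrix.smul_mulVec, dotProduct_add, dotProduct_smul,
      smul_eq_mul]
  have eSh : qSh = qS + (2 * b * r) * (x ⬝ᵥ K.mulVec x) := by
    rw [hqSh, hqS, h1]
    simp [Matrix.add_mulVec, Matrix.smul_mulVec, dotProduct_add, dotProduct_smul,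
      smul_eq_mul]
  have eY : x ⬝ᵥ ((b • K - r • M) * M⁻¹ * (b • K - r • M)).mulVec x = 2 * qS - qSh := by
    rw [h2, hqS, hqSh]
    simp [Matrix.sub_mulVec, Matrix.smul_mulVec, dotProduct_sub, dotProduct_smul,
      smul_eq_mul]
  have eEig : qS = lam * qSh := by
    rw [hqS, hqSh, hEq, dotProduct_smul, smul_eq_mul]
  have hqSpos : 0 < qS := by
    rw [eS]
    have : 0 < a * (x ⬝ᵥ M.mulVec x) := mul_pos ha qM
    nlinarith [sq_nonneg b]
  have hqShpos : 0 < qSh := by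
    rw [eSh]
    have : 0 ≤ (2 * b * r) * (x ⬝ᵥ K.mulVec x) :=
      mul_nonneg (by positivity) qK
    linarith
  have hle : qS ≤ qSh := by
    rw [eSh]
    have : 0 ≤ (2 * b * r) * (x ⬝ᵥ K.mulVec x) := mul_nonneg (by positivity) qK
    linarith
  have hge : qSh ≤ 2 * qS := by rw [eY] at qY; linarith
  constructor
  · rw [div_le_iff₀ (by norm_num : (0:ℝ) < 2)] at *
    nlinarith
  · nlinarith
end
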